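/- Let v₁, v₂ ∈ ℝ² be linearly independent and let Λ = {a·v₁ + b·v₂ : a, b ∈ ℤ}. Suppose ⋃_{p∈Λ} closedBall(p, 1) = ℝ². Then the density of the corresponding lattice family of unit disks exists and equals π/det(Λ): the function λ ↦ N_Λ(λ)·π/(4λ²) tends to π/det(Λ) as λ → ∞, where det(Λ) = |v₁.1·v₂.2 − v₁.2·v₂.1|. -/

import Mathlib

/-!
A unit disk centred at a lattice point meets the square `(-λ, λ)²` whenever its centre lies in the
closed square of half-side `λ - 1`, and only if its centre lies in the closed square of half-side
`λ + 1`. So `N_Λ(λ)` is squeezed between two counts of lattice points in squares, and the number of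
points of a lattice `L ⊆ ℝⁿ` in the cube `[-t, t]ⁿ` is asymptotic to `(2t)ⁿ / covol(L)`
(Mathlib's count of lattice points in dilates of a convex body). The covolume of `Λ` is
`|det(v₁, v₂)|`, computed on the fundamental parallelogram.
-/

open Metric Filter Real

noncomputable section

/-- The Euclidean plane. -/
abbrev Pt := EuclideanSpace ℝ (Fin 2)

/-- The open square `(−λ,λ) × (−λ,λ)`. -/
def openSquare (l : ℝ) : Set Pt := {p | |p 0| < l ∧ |p 1| < l}

/-- The lattice generated by `v₁` and `v₂`. -/
def lattice (v₁ v₂ : Pt) : Set Pt := {p | ∃ a b : ℤ, p = (a : ℝ) • v₁ + (b : ℝ) • v₂}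

/-- The determinant of the lattice generated by `v₁` and `v₂`. -/
def latticeDet (v₁ v₂ : Pt) : ℝ := |v₁ 0 * v₂ 1 - v₁ 1 * v₂ 0|

/-- `N_Λ(λ)`: the number of pairs `(a, b) ∈ ℤ × ℤ` such that the closed unit ball centered at
`a·v₁ + b·v₂` meets the open square `(−λ,λ) × (−λ,λ)`. -/
def NcountLat (v₁ v₂ : Pt) (l : ℝ) : ℕ :=
  {q : ℤ × ℤ |
    (closedBall ((q.1 : ℝ) • v₁ + (q.2 : ℝ) • v₂) 1 ∩ openSquare l).Nonempty}.ncard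

open MeasureTheory Submodule Bornology WithLp Topology

section Cube

variable {ι : Type*} [Fintype ι]

-- `ι → ℝ` carries the sup norm, so this is `[-t, t]^ι`.
variable (ι) in
def cube (t : ℝ) : Set (EuclideanSpace ℝ ι) := ofLp ⁻¹' closedBall 0 t

lemma mem_cube {x : EuclideanSpace ℝ ι} {t : ℝ} : x ∈ cube ι t ↔ ‖ofLp x‖ ≤ t := by
  simp [cube]

lemma mem_cube_of_dist_le {x y : EuclideanSpace ℝ ι} {t r : ℝ} (hx : x ∈ cube ι t)
    (hxy : dist y x ≤ r) : y ∈ cube ι (t + r) := by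
  rw [mem_cube] at hx ⊢
  have hdist : dist (ofLp y : ι → ℝ) (ofLp x) ≤ dist y x := by
    simpa using (PiLp.lipschitzWith_ofLp 2 fun _ : ι => ℝ).dist_le_mul y x
  have hy : ofLp y ∈ closedBall (ofLp x : ι → ℝ) r := mem_closedBall.2 (hdist.trans hxy)
  linarith [norm_le_of_mem_closedBall hy]

lemma isBounded_cube (t : ℝ) : IsBounded (cube ι t) :=
  (PiLp.antilipschitzWith_ofLp 2 _).isBounded_preimage isBounded_closedBall

lemma isClosed_cube (t : ℝ) : IsClosed (cube ι t) :=
  isClosed_closedBall.preimage (PiLp.continuous_ofLp 2 _)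

lemma convex_cube (t : ℝ) : Convex ℝ (cube ι t) :=
  (convex_closedBall _ t).linear_preimage (WithLp.linearEquiv 2 ℝ (ι → ℝ)).toLinearMap

lemma volume_frontier_cube (t : ℝ) : volume (frontier (cube ι t)) = 0 :=
  Convex.addHaar_frontier (volume : Measure (EuclideanSpace ℝ ι)) (convex_cube t)

lemma volume_cube {t : ℝ} (ht : 0 ≤ t) :
    volume (cube ι t) = ENNReal.ofReal ((2 * t) ^ Fintype.card ι) := by
  rw [cube, (PiLp.volume_preserving_ofLp ι).measure_preimage
    measurableSet_closedBall.nullMeasurableSet, Real.volume_pi_closedBall _ ht]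

lemma measureReal_cube_one : volume.real (cube ι 1) = 2 ^ Fintype.card ι := by
  rw [measureReal_def, volume_cube zero_le_one, ENNReal.toReal_ofReal (by positivity), mul_one]

variable [Nonempty ι]

lemma setOf_norm_ofLp_pow_le_eq_cube {t : ℝ} (ht : 0 ≤ t) :
    {x : EuclideanSpace ℝ ι | x ∈ Set.univ ∧ ‖ofLp x‖ ^ Fintype.card ι ≤ t ^ Fintype.card ι} =
      cube ι t := by
  ext x
  simp only [Set.mem_ofPred_eq, Set.mem_univ, true_and, mem_cube]
  exact pow_le_pow_iff_left₀ (norm_nonneg _) ht Fintype.card_ne_zero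

theorem tendsto_card_cube_inter_div_pow (L : Submodule ℤ (EuclideanSpace ℝ ι))
    [DiscreteTopology L] [IsZLattice ℝ L] :
    Tendsto (fun t : ℝ => (Nat.card (cube ι t ∩ L : Set _) : ℝ) / t ^ Fintype.card ι) atTop
      (𝓝 (2 ^ Fintype.card ι / ZLattice.covolume L)) := by
  have hcube : {x : EuclideanSpace ℝ ι | x ∈ Set.univ ∧ ‖ofLp x‖ ^ Fintype.card ι ≤ 1} =
      cube ι 1 := by
    simpa using setOf_norm_ofLp_pow_le_eq_cube (ι := ι) zero_le_one
  have hhom (x : EuclideanSpace ℝ ι) {r : ℝ} (hr : 0 ≤ r) :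
      ‖ofLp (r • x)‖ ^ Fintype.card ι =
        r ^ Module.finrank ℝ (EuclideanSpace ℝ ι) * ‖ofLp x‖ ^ Fintype.card ι := by
    rw [finrank_euclideanSpace, ofLp_smul, norm_smul, Real.norm_of_nonneg hr, mul_pow]
  have hlim := ZLattice.covolume.tendsto_card_le_div' L (X := Set.univ)
    (F := fun x => ‖ofLp x‖ ^ Fintype.card ι) (fun _ _ _ _ => trivial) (fun x _ hr => hhom x hr)
    (hcube ▸ isBounded_cube 1) (hcube ▸ (isClosed_cube 1).measurableSet)
    (hcube ▸ volume_frontier_cube 1)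
  rw [hcube, measureReal_cube_one] at hlim
  refine (hlim.comp (tendsto_pow_atTop (Fintype.card_ne_zero (α := ι)))).congr' ?_
  filter_upwards [eventually_ge_atTop 0] with t ht
  simp only [Function.comp_apply, setOf_norm_ofLp_pow_le_eq_cube ht]

end Cube

lemma Filter.Tendsto.div_pow_comp_add_const {f : ℝ → ℝ} {a : ℝ} {n : ℕ}
    (hf : Tendsto (fun t => f t / t ^ n) atTop (𝓝 a)) (c : ℝ) :
    Tendsto (fun t => f (t + c) / t ^ n) atTop (𝓝 a) := by
  have hshift := hf.comp (tendsto_atTop_add_const_right _ c tendsto_id)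
  have hratio : Tendsto (fun t : ℝ => (1 + c * t⁻¹) ^ n) atTop (𝓝 1) := by
    simpa using ((tendsto_inv_atTop_zero.const_mul c).const_add 1).pow n
  have hprod := hshift.mul hratio
  rw [mul_one] at hprod
  refine hprod.congr' ?_
  filter_upwards [eventually_gt_atTop 0, eventually_gt_atTop (-c)] with t ht htc
  have htc' : t + c ≠ 0 := by linarith
  rw [Function.comp_apply, id, show 1 + c * t⁻¹ = (t + c) / t by field_simp, div_pow]
  field_simp

lemma cube_subset_openSquare {t l : ℝ} (h : t < l) : cube (Fin 2) t ⊆ openSquare l := by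
  intro x hx
  have hcoord (i : Fin 2) : |x i| < l :=
    ((norm_le_pi_norm (ofLp x) i).trans (mem_cube.1 hx)).trans_lt h
  exact ⟨hcoord 0, hcoord 1⟩

lemma openSquare_subset_cube (l : ℝ) : openSquare l ⊆ cube (Fin 2) l := by
  rintro x ⟨h0, h1⟩
  rw [mem_cube, pi_norm_le_iff_of_nonneg ((abs_nonneg _).trans h0.le), Fin.forall_fin_two]
  exact ⟨h0.le, h1.le⟩

section Lattice

variable {v₁ v₂ : Pt}

def latticePoint (v₁ v₂ : Pt) (q : ℤ × ℤ) : Pt := (q.1 : ℝ) • v₁ + (q.2 : ℝ) • v₂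

lemma range_latticePoint (v₁ v₂ : Pt) : Set.range (latticePoint v₁ v₂) = span ℤ {v₁, v₂} := by
  ext x
  simp only [Set.mem_range, SetLike.mem_coe, mem_span_pair, latticePoint, Prod.exists,
    Int.cast_smul_eq_zsmul]

lemma latticePoint_injective (hli : LinearIndependent ℝ ![v₁, v₂]) :
    Function.Injective (latticePoint v₁ v₂) := by
  rintro ⟨a, b⟩ ⟨a', b'⟩ h
  have hdiff : ((a - a' : ℤ) : ℝ) • v₁ + ((b - b' : ℤ) : ℝ) • v₂ = 0 := by
    simp only [latticePoint] at h
    push_cast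
    linear_combination (norm := module) h
  obtain ⟨ha, hb⟩ := LinearIndependent.pair_iff.1 hli _ _ hdiff
  simp only [Int.cast_eq_zero, sub_eq_zero] at ha hb
  rw [ha, hb]

def latticeBasis (hli : LinearIndependent ℝ ![v₁, v₂]) : Module.Basis (Fin 2) ℝ Pt :=
  basisOfLinearIndependentOfCardEqFinrank hli (by simp)

lemma range_latticeBasis (hli : LinearIndependent ℝ ![v₁, v₂]) :
    Set.range (latticeBasis hli) = {v₁, v₂} := by
  simp [latticeBasis, Matrix.range_cons, Matrix.range_empty, Set.pair_comm]

lemma covolume_span_pair (hli : LinearIndependent ℝ ![v₁, v₂]) :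
    ZLattice.covolume (span ℤ {v₁, v₂}) = latticeDet v₁ v₂ := by
  let b₀ := (EuclideanSpace.basisFun (Fin 2) ℝ).toBasis
  have hb₀ : volume.real (ZSpan.fundamentalDomain b₀) = 1 := by
    rw [measureReal_congr (ZSpan.fundamentalDomain_ae_parallelepiped b₀ volume),
      OrthonormalBasis.coe_toBasis, measureReal_def,
      OrthonormalBasis.volume_parallelepiped, ENNReal.toReal_one]
  rw [← range_latticeBasis hli, ZLattice.covolume_eq_measure_fundamentalDomain _ volume
    (ZSpan.isAddFundamentalDomain (latticeBasis hli) volume),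
    ZSpan.measureReal_fundamentalDomain _ _ b₀, hb₀, mul_one, latticeDet,
    Module.Basis.det_apply, Matrix.det_fin_two]
  simp only [b₀, latticeBasis, Module.Basis.toMatrix_apply,
    OrthonormalBasis.coe_toBasis_repr_apply, EuclideanSpace.basisFun_repr,
    coe_basisOfLinearIndependentOfCardEqFinrank, Matrix.cons_val_zero, Matrix.cons_val_one]
  congr 1
  ring

lemma finite_setOf_latticePoint_mem (hli : LinearIndependent ℝ ![v₁, v₂]) {s : Set Pt}
    (hs : IsBounded s) : {q | latticePoint v₁ v₂ q ∈ s}.Finite := by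
  have hfin := ZSpan.setFinite_inter (latticeBasis hli) hs
  rw [range_latticeBasis, ← range_latticePoint] at hfin
  exact (hfin.preimage (latticePoint_injective hli).injOn).subset fun q hq => ⟨hq, q, rfl⟩

lemma ncard_setOf_latticePoint_mem (hli : LinearIndependent ℝ ![v₁, v₂]) (s : Set Pt) :
    {q | latticePoint v₁ v₂ q ∈ s}.ncard = Nat.card (s ∩ span ℤ {v₁, v₂} : Set Pt) := by
  rw [Nat.card_coe_set_eq, ← range_latticePoint, ← Set.ncard_preimage_of_injective_subset_range
    (latticePoint_injective hli) Set.inter_subset_right, Set.preimage_inter_range]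
  rfl

lemma setOf_latticePoint_mem_cube_subset (l : ℝ) :
    {q | latticePoint v₁ v₂ q ∈ cube (Fin 2) (l - 1)} ⊆
      {q : ℤ × ℤ | (closedBall (latticePoint v₁ v₂ q) 1 ∩ openSquare l).Nonempty} :=
  fun _ hq => ⟨_, mem_closedBall_self zero_le_one, cube_subset_openSquare (by linarith) hq⟩

lemma setOf_closedBall_inter_openSquare_nonempty_subset (l : ℝ) :
    {q : ℤ × ℤ | (closedBall (latticePoint v₁ v₂ q) 1 ∩ openSquare l).Nonempty} ⊆
      {q | latticePoint v₁ v₂ q ∈ cube (Fin 2) (l + 1)} :=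
  fun _ ⟨_, hball, hsq⟩ =>
    mem_cube_of_dist_le (openSquare_subset_cube l hsq) (by rw [dist_comm]; exact hball)

lemma card_cube_inter_le_NcountLat (hli : LinearIndependent ℝ ![v₁, v₂]) (l : ℝ) :
    Nat.card (cube (Fin 2) (l - 1) ∩ span ℤ {v₁, v₂} : Set Pt) ≤ NcountLat v₁ v₂ l := by
  rw [← ncard_setOf_latticePoint_mem hli]
  exact Set.ncard_le_ncard (setOf_latticePoint_mem_cube_subset l)
    ((finite_setOf_latticePoint_mem hli (isBounded_cube _)).subset
      (setOf_closedBall_inter_openSquare_nonempty_subset l))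

lemma NcountLat_le_card_cube_inter (hli : LinearIndependent ℝ ![v₁, v₂]) (l : ℝ) :
    NcountLat v₁ v₂ l ≤ Nat.card (cube (Fin 2) (l + 1) ∩ span ℤ {v₁, v₂} : Set Pt) := by
  rw [← ncard_setOf_latticePoint_mem hli]
  exact Set.ncard_le_ncard (setOf_closedBall_inter_openSquare_nonempty_subset l)
    (finite_setOf_latticePoint_mem hli (isBounded_cube _))

end Lattice

theorem lattice_density_eq_general (v₁ v₂ : Pt)
    (hli : LinearIndependent ℝ ![v₁, v₂]) :
    Filter.Tendsto (fun l : ℝ => (NcountLat v₁ v₂ l : ℝ) * π / (4 * l ^ 2))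
      Filter.atTop (nhds (π / latticeDet v₁ v₂)) := by
  set A : ℝ → ℝ := fun t => Nat.card (cube (Fin 2) t ∩ span ℤ {v₁, v₂} : Set Pt)
  have hA : Tendsto (fun t => A t / t ^ 2) atTop (𝓝 (4 / latticeDet v₁ v₂)) := by
    have h := tendsto_card_cube_inter_div_pow (span ℤ (Set.range (latticeBasis hli)))
    rw [range_latticeBasis hli, covolume_span_pair hli] at h
    norm_num at h
    exact h
  have hbound (c : ℝ) :
      Tendsto (fun l => A (l + c) * π / (4 * l ^ 2)) atTop (𝓝 (π / latticeDet v₁ v₂)) := by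
    rw [show π / latticeDet v₁ v₂ = π / 4 * (4 / latticeDet v₁ v₂) by ring]
    exact ((hA.div_pow_comp_add_const c).const_mul (π / 4)).congr fun l => by ring
  refine tendsto_of_tendsto_of_tendsto_of_le_of_le (hbound (-1)) (hbound 1) (fun l => ?_)
    (fun l => ?_)
  · gcongr
    rw [← sub_eq_add_neg]
    dsimp only [A]
    exact_mod_cast card_cube_inter_le_NcountLat hli l
  · gcongr
    dsimp only [A]
    exact_mod_cast NcountLat_le_card_cube_inter hli l

/-- The density of a lattice family of unit disks covering the plane exists and equals
`π / det(Λ)`. -/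
theorem lattice_density_eq (v₁ v₂ : Pt)
    (hli : LinearIndependent ℝ ![v₁, v₂])
    (hcover : (⋃ p ∈ lattice v₁ v₂, closedBall p 1) = Set.univ) :
    Filter.Tendsto (fun l : ℝ => (NcountLat v₁ v₂ l : ℝ) * π / (4 * l ^ 2))
      Filter.atTop (nhds (π / latticeDet v₁ v₂)) :=
  lattice_density_eq_general v₁ v₂ hli
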